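/- Let (b_n) be a D-sequence. For every x ∈ (−1/2, 1/2], there exist integers d_n (n ≥ 1) with |d_n| ≤ b_n/(2 b_{n−1}) for all n ≥ 1, such that x = ∑_{n=1}^∞ d_n / b_n. -/

import Mathlib

def IsDSeq (b : ℕ → ℕ) : Prop :=
  b 0 = 1 ∧ (∀ n, b n ∣ b (n + 1)) ∧ ∀ n, b n ≠ b (n + 1)

/-!
Let `a n` be the integer nearest to `b n * x`, rounding halves down, so that the error
`b n * x - a n` lies in `(-1/2, 1/2]`; since `x` itself lies there, `a 0 = 0`. The digits
`d (n + 1) = a (n + 1) - (b (n + 1) / b n) * a n` make the series telescope to `a n / b n → x`,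
and writing `d (n + 1)` as a combination of two consecutive errors bounds it by
`b (n + 1) / (2 * b n)`.
-/

open Filter Topology

theorem sub_ceil_sub_half_mem_Ioc (y : ℝ) : y - ⌈y - 1 / 2⌉ ∈ Set.Ioc (-(1 / 2)) (1 / 2) :=
  ⟨by linarith [Int.ceil_lt_add_one (y - 1 / 2)], by linarith [Int.le_ceil (y - 1 / 2)]⟩

/-- Half-openness of the interval is what makes the bound `m / 2` rather than `(m + 1) / 2`. -/
theorem abs_le_half_of_eq_mul_sub {D : ℤ} {m : ℕ} {u v : ℝ} (hm : 0 < m)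
    (hu : u ∈ Set.Ioc (-(1 / 2)) (1 / 2)) (hv : v ∈ Set.Ioc (-(1 / 2)) (1 / 2))
    (h : (D : ℝ) = m * u - v) : |(D : ℝ)| ≤ m / 2 := by
  have hm' : (0 : ℝ) < m := by exact_mod_cast hm
  have hlt : |(2 * D : ℝ)| < m + 1 := by
    rw [abs_lt]
    constructor <;> nlinarith [hu.1, hu.2, hv.1, hv.2]
  have hle : |2 * D| ≤ m := Int.lt_add_one_iff.mp (by exact_mod_cast hlt)
  have hle' : |(2 * D : ℝ)| ≤ m := by exact_mod_cast hle
  rw [abs_mul, abs_two] at hle'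
  linarith

/-- The division `b (n + 1) / b n` is exact for a D-sequence. -/
def dSeqDigit (b : ℕ → ℕ) (a : ℕ → ℤ) (n : ℕ) : ℤ :=
  a (n + 1) - (b (n + 1) / b n : ℕ) * a n

namespace IsDSeq

variable {b : ℕ → ℕ}

theorem pos (hb : IsDSeq b) (n : ℕ) : 0 < b n := by
  refine Nat.pos_of_ne_zero fun h => hb.2.2 n ?_
  have hdvd := hb.2.1 n
  rw [h] at hdvd ⊢
  exact (Nat.eq_zero_of_zero_dvd hdvd).symm

theorem two_mul_le (hb : IsDSeq b) (n : ℕ) : 2 * b n ≤ b (n + 1) := by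
  obtain ⟨k, hk⟩ := hb.2.1 n
  have hpos := hb.pos (n + 1)
  have hne := hb.2.2 n
  rcases k with _ | _ | k
  · simp_all
  · simp_all
  · rw [hk]; nlinarith

theorem two_pow_le (hb : IsDSeq b) : ∀ n, 2 ^ n ≤ b n
  | 0 => hb.1.ge
  | n + 1 => by
    rw [pow_succ']
    exact (Nat.mul_le_mul_left 2 (hb.two_pow_le n)).trans (hb.two_mul_le n)

theorem inv_le_half_pow (hb : IsDSeq b) (n : ℕ) : ((b n : ℝ))⁻¹ ≤ (1 / 2) ^ n := by
  rw [one_div, inv_pow]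
  exact inv_anti₀ (by positivity) (by exact_mod_cast hb.two_pow_le n)

theorem cast_succ_eq_div_mul (hb : IsDSeq b) (n : ℕ) :
    (b (n + 1) : ℝ) = (b (n + 1) / b n : ℕ) * b n := by
  exact_mod_cast (Nat.div_mul_cancel (hb.2.1 n)).symm

theorem abs_dSeqDigit_le (hb : IsDSeq b) {x : ℝ} {a : ℕ → ℤ}
    (ha : ∀ n, b n * x - a n ∈ Set.Ioc (-(1 / 2)) (1 / 2)) (n : ℕ) :
    |(dSeqDigit b a n : ℝ)| ≤ b (n + 1) / (2 * b n) := by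
  have hbn : (b n : ℝ) ≠ 0 := by exact_mod_cast (hb.pos n).ne'
  have hm : 0 < b (n + 1) / b n :=
    Nat.div_pos (Nat.le_of_dvd (hb.pos _) (hb.2.1 n)) (hb.pos n)
  rw [hb.cast_succ_eq_div_mul, mul_div_mul_right _ _ hbn]
  refine abs_le_half_of_eq_mul_sub hm (ha n) (ha (n + 1)) ?_
  rw [dSeqDigit, hb.cast_succ_eq_div_mul]
  simp only [Int.cast_sub, Int.cast_mul, Int.cast_natCast]
  ring

theorem dSeqDigit_div (hb : IsDSeq b) (a : ℕ → ℤ) (n : ℕ) :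
    (dSeqDigit b a n : ℝ) / b (n + 1) = a (n + 1) / b (n + 1) - a n / b n := by
  have hbn : (b n : ℝ) ≠ 0 := by exact_mod_cast (hb.pos n).ne'
  have hbn1 : (b (n + 1) : ℝ) ≠ 0 := by exact_mod_cast (hb.pos (n + 1)).ne'
  rw [div_sub_div _ _ hbn1 hbn, eq_div_iff (mul_ne_zero hbn1 hbn), div_mul_eq_mul_div,
    div_eq_iff hbn1, dSeqDigit]
  nth_rewrite 2 [hb.cast_succ_eq_div_mul]
  simp only [Int.cast_sub, Int.cast_mul, Int.cast_natCast]
  ring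

theorem tendsto_div (hb : IsDSeq b) {x : ℝ} {a : ℕ → ℤ}
    (ha : ∀ n, b n * x - a n ∈ Set.Ioc (-(1 / 2)) (1 / 2)) :
    Tendsto (fun n => (a n : ℝ) / b n) atTop (𝓝 x) := by
  rw [← tendsto_sub_nhds_zero_iff]
  refine squeeze_zero_norm (fun n => ?_)
    (tendsto_pow_atTop_nhds_zero_of_lt_one (r := (1 / 2 : ℝ)) (by norm_num) (by norm_num))
  have hbn : (0 : ℝ) < b n := by exact_mod_cast hb.pos n
  have herr : |(b n : ℝ) * x - a n| ≤ 1 :=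
    abs_le.mpr ⟨by linarith [(ha n).1], by linarith [(ha n).2]⟩
  calc ‖(a n : ℝ) / b n - x‖ = |(b n : ℝ) * x - a n| * (b n : ℝ)⁻¹ := by
        rw [Real.norm_eq_abs, abs_sub_comm,
          show x - a n / b n = (b n * x - a n) / b n by field_simp, abs_div, abs_of_pos hbn,
          div_eq_mul_inv]
    _ ≤ 1 * (1 / 2) ^ n := mul_le_mul herr (hb.inv_le_half_pow n) (by positivity) zero_le_one
    _ = (1 / 2) ^ n := one_mul _

theorem hasSum_dSeqDigit_div (hb : IsDSeq b) {x : ℝ} {a : ℕ → ℤ}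
    (ha : ∀ n, b n * x - a n ∈ Set.Ioc (-(1 / 2)) (1 / 2)) (ha0 : a 0 = 0) :
    HasSum (fun n => (dSeqDigit b a n : ℝ) / b (n + 1)) x := by
  have hsum : Summable fun n => (dSeqDigit b a n : ℝ) / b (n + 1) := by
    refine summable_geometric_two.of_norm_bounded fun n => ?_
    have hbn1 : (0 : ℝ) < b (n + 1) := by exact_mod_cast hb.pos (n + 1)
    have hbn : (0 : ℝ) < b n := by exact_mod_cast hb.pos n
    calc ‖(dSeqDigit b a n : ℝ) / b (n + 1)‖ = |(dSeqDigit b a n : ℝ)| / b (n + 1) := by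
          rw [Real.norm_eq_abs, abs_div, Nat.abs_cast]
      _ ≤ b (n + 1) / (2 * b n) / b (n + 1) := by gcongr; exact hb.abs_dSeqDigit_le ha n
      _ = (b n : ℝ)⁻¹ / 2 := by field_simp
      _ ≤ (b n : ℝ)⁻¹ := by linarith [inv_pos.mpr hbn]
      _ ≤ (1 / 2) ^ n := hb.inv_le_half_pow n
  refine hsum.hasSum_iff_tendsto_nat.2 ?_
  simp_rw [hb.dSeqDigit_div, Finset.sum_range_sub (fun i => (a i : ℝ) / b i), ha0,
    Int.cast_zero, zero_div, sub_zero]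
  exact hb.tendsto_div ha

end IsDSeq

theorem stmt_11 (b : ℕ → ℕ) (hb : IsDSeq b)
    (x : ℝ) (hx : x ∈ Set.Ioc (-(1 / 2) : ℝ) (1 / 2)) :
    ∃ d : ℕ → ℤ,
      (∀ n : ℕ, 1 ≤ n → |(d n : ℝ)| ≤ (b n : ℝ) / (2 * b (n - 1))) ∧
      HasSum (fun n : ℕ => (d (n + 1) : ℝ) / b (n + 1)) x := by
  let a : ℕ → ℤ := fun n => ⌈(b n : ℝ) * x - 1 / 2⌉
  have ha : ∀ n, b n * x - a n ∈ Set.Ioc (-(1 / 2)) (1 / 2) :=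
    fun n => sub_ceil_sub_half_mem_Ioc _
  have ha0 : a 0 = 0 := by
    simp only [a, hb.1, Nat.cast_one, one_mul, Int.ceil_eq_zero_iff, Set.mem_Ioc]
    constructor <;> linarith [hx.1, hx.2]
  refine ⟨fun n => n.casesOn 0 (dSeqDigit b a), fun n hn => ?_, ?_⟩
  · obtain ⟨k, rfl⟩ := Nat.exists_eq_add_of_le' hn
    rw [Nat.add_sub_cancel]
    exact hb.abs_dSeqDigit_le ha k
  · exact hb.hasSum_dSeqDigit_div ha ha0
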